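/- arXiv:2605.02023 — 4 statements merged into one kernel-verified Lean document; each statement's English description precedes it below -/
import Mathlib

section
/- For every n ≥ 1 and t > 0, if z ∼ N(0, I₂) and v_j = (cos((j−1)π/n), sin((j−1)π/n)), then ℙ[min_{1≤j≤n} |⟨z, v_j⟩| ≥ t] = (2n/π) ∫₀^{π/(2n)} exp(−t²/(2 sin²θ)) dθ. -/
/-!
Write `z = r (cos φ, sin φ)`. Then `⟨z, v_j⟩ = r cos (φ - jπ/n)`, so the event is
`t ≤ r m(φ)` with `m(φ) = min_j |cos (φ - jπ/n)|`. Under the Gaussian, `φ` is uniform on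
`(-π, π)` and independent of `r`, whose density is `r e^{-r²/2}`; hence the conditional
probability given `φ` is `exp (-t² / (2 m(φ)²))`. The function `m` has period `π/n`, and on the
period centred at `π/2` it is `m(π/2 + θ) = |sin θ|`, since there the `j = 0` term is the
smallest. Averaging over `φ` gives `2n` periods, each contributing twice the integral over
`[0, π/(2n)]`.
-/

open Real MeasureTheory ProbabilityTheory Set

noncomputable def minAbsCos (n : ℕ) (φ : ℝ) : ℝ := ⨅ j : Fin n, |cos (φ - j * π / n)|

theorem measurable_minAbsCos (n : ℕ) : Measurable (minAbsCos n) :=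
  Measurable.iInf fun _ => by fun_prop

theorem iInf_abs_mul_cos_add_mul_sin_eq_mul_minAbsCos (n : ℕ) {r : ℝ} (hr : 0 ≤ r) (φ : ℝ) :
    ⨅ j : Fin n, |r * cos φ * cos (j * π / n) + r * sin φ * sin (j * π / n)|
      = r * minAbsCos n φ := by
  rw [minAbsCos, mul_iInf_of_nonneg hr]
  refine iInf_congr fun j => ?_
  rw [cos_sub, ← abs_of_nonneg hr, ← abs_mul, abs_of_nonneg hr]
  ring_nf

theorem minAbsCos_periodic (n : ℕ) : Function.Periodic (minAbsCos n) (π / n) := by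
  intro φ
  rcases n with _ | n
  · simp
  · -- Shifting by `π/n` rotates the index; the wrapped-around term changes sign (`cos (x + π)`).
    unfold minAbsCos
    rw [← (finRotate (n + 1)).iInf_comp]
    refine iInf_congr fun j => ?_
    rw [coe_finRotate]
    split_ifs with hj
    · subst hj
      conv_rhs => rw [← abs_neg, ← cos_add_pi]
      congr 2
      push_cast [Fin.val_zero, Fin.val_last]
      field_simp
      ring
    · push_cast
      congr 2
      ring

theorem abs_sin_le_sin_of_mem_Icc {a θ x : ℝ} (hθ : |θ| ≤ a) (ha : a ≤ π / 2)
    (hx : x ∈ Icc a (π - a)) : |sin θ| ≤ sin x := by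
  have ha0 : 0 ≤ a := (abs_nonneg θ).trans hθ
  have hsin_a : |sin θ| ≤ sin a := by
    rw [abs_sin_eq_sin_abs_of_abs_le_pi (by linarith [pi_pos])]
    exact sin_le_sin_of_le_of_le_pi_div_two (by linarith [abs_nonneg θ, pi_pos]) ha hθ
  refine hsin_a.trans ?_
  rcases le_total x (π / 2) with hx2 | hx2
  · exact sin_le_sin_of_le_of_le_pi_div_two (by linarith [pi_pos]) hx2 hx.1
  · rw [← sin_pi_sub x]
    exact sin_le_sin_of_le_of_le_pi_div_two (by linarith [pi_pos]) (by linarith)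
      (by linarith [hx.2])

theorem minAbsCos_pi_div_two_add {n : ℕ} (hn : n ≠ 0) {θ : ℝ} (hθ : |θ| ≤ π / (2 * n)) :
    minAbsCos n (π / 2 + θ) = |sin θ| := by
  have : NeZero n := ⟨hn⟩
  have hterm : ∀ j : Fin n, |cos (π / 2 + θ - j * π / n)| = |sin (j * π / n - θ)| := fun j => by
    rw [← cos_pi_div_two_sub]; ring_nf
  apply le_antisymm
  · refine (ciInf_le (finite_range _).bddBelow 0).trans_eq ?_
    rw [hterm]
    simp [abs_neg]
  · refine le_ciInf fun j => ?_
    rw [hterm]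
    rcases (j : ℕ).eq_zero_or_pos with hj | hj
    · simp [hj, abs_neg]
    · set a := π / (2 * n)
      have hn' : (1 : ℝ) ≤ n := by exact_mod_cast Nat.one_le_iff_ne_zero.2 hn
      have hj1 : (1 : ℝ) ≤ (j : ℕ) := by exact_mod_cast hj
      have hjn : ((j : ℕ) : ℝ) + 1 ≤ n := by exact_mod_cast j.isLt
      have ha : 0 < a := by positivity
      have hπ : π = 2 * n * a := by simp only [a]; field_simp
      have hja : (j : ℕ) * π / n = 2 * (j : ℕ) * a := by rw [hπ]; field_simp
      refine (abs_sin_le_sin_of_mem_Icc hθ ?_ ⟨?_, ?_⟩).trans (le_abs_self _)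
      · rw [hπ]; nlinarith
      · rw [hja]; nlinarith [abs_le.1 hθ]
      · rw [hja, hπ]; nlinarith [abs_le.1 hθ]

/-- For `0 < t`, the probability `ℙ(t ≤ c R)` where `R` has density `r e^{-r²/2}` on `(0, ∞)`. -/
noncomputable def rayleighTail (t c : ℝ) : ℝ := if 0 < c then exp (-(t / c) ^ 2 / 2) else 0

theorem measurable_rayleighTail (t : ℝ) : Measurable (rayleighTail t) :=
  Measurable.ite measurableSet_Ioi (by fun_prop) measurable_const

theorem rayleighTail_mem_Icc (t c : ℝ) : rayleighTail t c ∈ Icc 0 1 := by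
  unfold rayleighTail
  split_ifs
  · exact ⟨(exp_pos _).le, exp_le_one_iff.2 (by nlinarith [sq_nonneg (t / c)])⟩
  · simp

theorem integrable_mul_exp_neg_sq_div_two :
    Integrable fun r : ℝ => r * exp (-r ^ 2 / 2) := by
  convert integrable_mul_exp_neg_mul_sq (b := 1 / 2) (by norm_num) using 4
  ring

theorem integral_Ioi_mul_exp_neg_sq_div_two (a : ℝ) :
    ∫ r in Ioi a, r * exp (-r ^ 2 / 2) = exp (-a ^ 2 / 2) := by
  have hderiv (r : ℝ) : HasDerivAt (fun r => -exp (-r ^ 2 / 2)) (r * exp (-r ^ 2 / 2)) r := by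
    refine (((hasDerivAt_pow 2 r).fun_neg.div_const 2).exp).fun_neg.congr_deriv ?_
    norm_num
    ring
  have hlim : Filter.Tendsto (fun r : ℝ => -exp (-r ^ 2 / 2)) Filter.atTop (nhds 0) := by
    simpa using (tendsto_exp_atBot.comp <| (Filter.tendsto_neg_atBot_iff.2
      (Filter.tendsto_pow_atTop two_ne_zero)).atBot_div_const two_pos).neg
  rw [integral_Ioi_of_hasDerivAt_of_tendsto' (fun r _ => hderiv r)
    integrable_mul_exp_neg_sq_div_two.integrableOn hlim]
  simp

theorem lintegral_Ioi_indicator_le_mul_eq_rayleighTail {t : ℝ} (ht : 0 < t) (c : ℝ) :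
    ∫⁻ r in Ioi 0, {r | t ≤ r * c}.indicator (fun r => ENNReal.ofReal (r * exp (-r ^ 2 / 2))) r
      = ENNReal.ofReal (rayleighTail t c) := by
  unfold rayleighTail
  split_ifs with hc
  · have hset : {r : ℝ | t ≤ r * c} = Ici (t / c) := by ext r; simp [div_le_iff₀ hc]
    have hsub : Ici (t / c) ⊆ Ioi 0 := fun r hr => (div_pos ht hc).trans_le hr
    rw [hset, lintegral_indicator measurableSet_Ici, Measure.restrict_restrict measurableSet_Ici,
      inter_eq_left.2 hsub, ← ofReal_integral_eq_lintegral_ofReal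
        integrable_mul_exp_neg_sq_div_two.integrableOn
        (ae_restrict_of_forall_mem measurableSet_Ici fun r hr =>
          mul_nonneg (hsub hr).le (exp_pos _).le),
      integral_Ici_eq_integral_Ioi, integral_Ioi_mul_exp_neg_sq_div_two]
  · rw [ENNReal.ofReal_zero]
    refine (setLIntegral_congr_fun measurableSet_Ioi (g := fun _ => 0) fun r hr => ?_).trans
      lintegral_zero
    exact indicator_of_notMem
      (fun h : r ∈ {r : ℝ | t ≤ r * c} => by nlinarith [h.out, mem_Ioi.1 hr]) _

theorem gaussianPDFReal_mul_polarCoord_symm (p : ℝ × ℝ) :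
    gaussianPDFReal 0 1 (polarCoord.symm p).1 * gaussianPDFReal 0 1 (polarCoord.symm p).2
      = (2 * π)⁻¹ * exp (-p.1 ^ 2 / 2) := by
  have hsq : (p.1 * cos p.2) ^ 2 + (p.1 * sin p.2) ^ 2 = p.1 ^ 2 := by
    linear_combination p.1 ^ 2 * cos_sq_add_sin_sq p.2
  simp only [polarCoord_symm_apply, gaussianPDFReal_def, NNReal.coe_one, mul_one, sub_zero]
  rw [mul_mul_mul_comm, ← exp_add, ← mul_inv, mul_self_sqrt (by positivity)]
  congr 2
  linear_combination -hsq / 2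

theorem lintegral_gaussianReal_prod_eq_polarCoord {f : ℝ × ℝ → ENNReal} (hf : Measurable f) :
    ∫⁻ p, f p ∂(gaussianReal 0 1).prod (gaussianReal 0 1) =
      ENNReal.ofReal (2 * π)⁻¹ * ∫⁻ p in polarCoord.target,
        ENNReal.ofReal (p.1 * exp (-p.1 ^ 2 / 2)) * f (polarCoord.symm p) := by
  rw [gaussianReal_of_var_ne_zero 0 one_ne_zero,
    prod_withDensity (measurable_gaussianPDF 0 1) (measurable_gaussianPDF 0 1),
    ← Measure.volume_eq_prod, lintegral_withDensity_eq_lintegral_mul _ (by fun_prop) hf,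
    ← lintegral_comp_polarCoord_symm, ← lintegral_const_mul' _ _ ENNReal.ofReal_ne_top]
  refine setLIntegral_congr_fun polarCoord.open_target.measurableSet fun p hp => ?_
  have hr : 0 ≤ p.1 := (mem_Ioi.1 (mem_prod.1 hp).1).le
  simp only [Pi.mul_apply, smul_eq_mul, gaussianPDF]
  rw [← ENNReal.ofReal_mul (gaussianPDFReal_nonneg 0 1 _), gaussianPDFReal_mul_polarCoord_symm,
    ← mul_assoc, ← mul_assoc, ← ENNReal.ofReal_mul hr, ← ENNReal.ofReal_mul (by positivity)]
  congr 2
  ring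

theorem integrableOn_rayleighTail_comp {t : ℝ} {c : ℝ → ℝ} (hc : Measurable c) {s : Set ℝ}
    (hs : volume s ≠ ⊤) : IntegrableOn (fun φ => rayleighTail t (c φ)) s :=
  Measure.integrableOn_of_bounded (M := 1) hs
    ((measurable_rayleighTail t).comp hc).aestronglyMeasurable
    (ae_of_all _ fun φ => by
      obtain ⟨h0, h1⟩ := rayleighTail_mem_Icc t (c φ)
      rwa [norm_of_nonneg h0])

theorem gaussianReal_prod_apply_eq_integral_rayleighTail {S : Set (ℝ × ℝ)} (hS : MeasurableSet S)
    {c : ℝ → ℝ} (hc : Measurable c) {t : ℝ} (ht : 0 < t)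
    (hS_polar : ∀ r > 0, ∀ φ, polarCoord.symm (r, φ) ∈ S ↔ t ≤ r * c φ) :
    (gaussianReal 0 1).prod (gaussianReal 0 1) S =
      ENNReal.ofReal ((2 * π)⁻¹ * ∫ φ in -π..π, rayleighTail t (c φ)) := by
  have hpolar : ∀ p ∈ polarCoord.target,
      ENNReal.ofReal (p.1 * exp (-p.1 ^ 2 / 2)) * S.indicator 1 (polarCoord.symm p)
        = {r | t ≤ r * c p.2}.indicator (fun r => ENNReal.ofReal (r * exp (-r ^ 2 / 2))) p.1 := by
    intro p hp
    have hmem := hS_polar p.1 (mem_prod.1 hp).1 p.2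
    by_cases h : t ≤ p.1 * c p.2
    · rw [indicator_of_mem (hmem.2 h), indicator_of_mem (show p.1 ∈ {r | t ≤ r * c p.2} from h),
        Pi.one_apply, mul_one]
    · rw [indicator_of_notMem (mt hmem.1 h),
        indicator_of_notMem (show p.1 ∉ {r | t ≤ r * c p.2} from h), mul_zero]
  have hmeas : Measurable fun p : ℝ × ℝ =>
      {r | t ≤ r * c p.2}.indicator (fun r => ENNReal.ofReal (r * exp (-r ^ 2 / 2))) p.1 :=
    (by fun_prop : Measurable fun p : ℝ × ℝ => ENNReal.ofReal (p.1 * exp (-p.1 ^ 2 / 2))).indicator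
      (measurableSet_le measurable_const (measurable_fst.mul (hc.comp measurable_snd)))
  rw [← lintegral_indicator_one hS, lintegral_gaussianReal_prod_eq_polarCoord
      (measurable_one.indicator hS),
    setLIntegral_congr_fun polarCoord.open_target.measurableSet hpolar, polarCoord_target,
    Measure.volume_eq_prod, ← Measure.prod_restrict, lintegral_prod_symm _ hmeas.aemeasurable]
  simp_rw [lintegral_Ioi_indicator_le_mul_eq_rayleighTail ht]
  rw [← ofReal_integral_eq_lintegral_ofReal
      (integrableOn_rayleighTail_comp hc measure_Ioo_lt_top.ne)
      (ae_of_all _ fun φ => (rayleighTail_mem_Icc t (c φ)).1),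
    ← ENNReal.ofReal_mul (by positivity), intervalIntegral.integral_of_le (by linarith [pi_pos]),
    integral_Ioc_eq_integral_Ioo]

theorem integral_rayleighTail_minAbsCos {n : ℕ} (hn : n ≠ 0) (t : ℝ) :
    ∫ φ in -π..π, rayleighTail t (minAbsCos n φ)
      = 4 * n * ∫ θ in 0..π / (2 * n), exp (-t ^ 2 / (2 * sin θ ^ 2)) := by
  set g := fun φ => rayleighTail t (minAbsCos n φ)
  set a := π / (2 * n) with ha_def
  have hn1 : (1 : ℝ) ≤ n := by exact_mod_cast Nat.one_le_iff_ne_zero.2 hn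
  have ha : 0 < a := by positivity
  have hπ : π = 2 * n * a := by rw [ha_def]; field_simp
  have hg_int (x y : ℝ) : IntervalIntegrable g volume x y :=
    ⟨integrableOn_rayleighTail_comp (measurable_minAbsCos n) measure_Ioc_lt_top.ne,
      integrableOn_rayleighTail_comp (measurable_minAbsCos n) measure_Ioc_lt_top.ne⟩
  have hg_per : Function.Periodic g (π / n) := fun φ => by simp only [g, minAbsCos_periodic n φ]
  have hperiods : ∫ φ in -π..π, g φ = 2 * n * ∫ φ in π / 2 - a..π / 2 + a, g φ := by
    have h := hg_per.intervalIntegral_add_zsmul_eq (2 * n) (-π) hg_int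
    have hend : -π + (2 * n : ℤ) • (π / n) = π := by
      rw [zsmul_eq_mul]; push_cast; field_simp; ring
    have hperiod : π / 2 - a + π / n = π / 2 + a := by rw [hπ]; field_simp; ring
    rwa [hend, hg_per.intervalIntegral_add_eq (-π) (π / 2 - a), hperiod, zsmul_eq_mul,
      Int.cast_mul, Int.cast_ofNat, Int.cast_natCast] at h
  have hhalf : ∀ θ ∈ Ioc 0 a, g (π / 2 + θ) = exp (-t ^ 2 / (2 * sin θ ^ 2)) ∧
      g (π / 2 - θ) = exp (-t ^ 2 / (2 * sin θ ^ 2)) := by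
    intro θ hθ
    have hsin : 0 < sin θ := sin_pos_of_pos_of_lt_pi hθ.1 (by nlinarith [hθ.2, hθ.1])
    have hval : rayleighTail t (sin θ) = exp (-t ^ 2 / (2 * sin θ ^ 2)) := by
      rw [rayleighTail, if_pos hsin, div_pow]; ring_nf
    refine ⟨?_, ?_⟩
    · rw [← hval]; simp only [g]
      rw [minAbsCos_pi_div_two_add hn (by rw [abs_of_pos hθ.1]; exact hθ.2), abs_of_pos hsin]
    · rw [← hval]; simp only [g]
      rw [sub_eq_add_neg,
        minAbsCos_pi_div_two_add hn (by rw [abs_neg, abs_of_pos hθ.1]; exact hθ.2), sin_neg,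
        abs_neg, abs_of_pos hsin]
  have hright : ∫ φ in π / 2..π / 2 + a, g φ = ∫ θ in 0..a, exp (-t ^ 2 / (2 * sin θ ^ 2)) := by
    have h := intervalIntegral.integral_comp_add_left g (π / 2) (a := 0) (b := a)
    rw [add_zero] at h
    rw [← h]
    exact intervalIntegral.integral_congr_ae (ae_of_all _ fun θ hθ =>
      (hhalf θ (by rwa [uIoc_of_le ha.le] at hθ)).1)
  have hleft : ∫ φ in π / 2 - a..π / 2, g φ = ∫ θ in 0..a, exp (-t ^ 2 / (2 * sin θ ^ 2)) := by
    have h := intervalIntegral.integral_comp_sub_left g (π / 2) (a := 0) (b := a)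
    rw [sub_zero] at h
    rw [← h]
    exact intervalIntegral.integral_congr_ae (ae_of_all _ fun θ hθ =>
      (hhalf θ (by rwa [uIoc_of_le ha.le] at hθ)).2)
  rw [hperiods, ← intervalIntegral.integral_add_adjacent_intervals (hg_int _ _) (hg_int _ _),
    hleft, hright]
  ring

/-- For `z ∼ N(0, I₂)` and `v j = (cos((j-1)π/n), sin((j-1)π/n))`,
`ℙ[min_j |⟨z, v j⟩| ≥ t] = (2n/π) ∫₀^{π/(2n)} exp(-t²/(2 sin² θ)) dθ`. -/
theorem tail_prob_min_abs_inner (n : ℕ) (hn : 1 ≤ n) (t : ℝ) (ht : 0 < t) :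
    (Measure.pi fun _ : Fin 2 => gaussianReal 0 1)
        {z | t ≤ ⨅ j : Fin n, |z 0 * Real.cos ((j : ℝ) * π / n)
          + z 1 * Real.sin ((j : ℝ) * π / n)|}
      = ENNReal.ofReal ((2 * n / π) *
          ∫ θ in Set.Icc 0 (π / (2 * n)), Real.exp (-(t ^ 2) / (2 * Real.sin θ ^ 2))) := by
  set S : Set (ℝ × ℝ) := {p | t ≤ ⨅ j : Fin n, |p.1 * cos (j * π / n) + p.2 * sin (j * π / n)|}
  have hS : MeasurableSet S :=
    measurableSet_le measurable_const (Measurable.iInf fun _ => by fun_prop)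
  have hpi : (Measure.pi fun _ : Fin 2 => gaussianReal 0 1)
      {z | t ≤ ⨅ j : Fin n, |z 0 * cos (j * π / n) + z 1 * sin (j * π / n)|}
        = (gaussianReal 0 1).prod (gaussianReal 0 1) S :=
    (measurePreserving_piFinTwo fun _ => gaussianReal 0 1).measure_preimage hS.nullMeasurableSet
  have hSpolar (r : ℝ) (hr : 0 < r) (φ : ℝ) :
      polarCoord.symm (r, φ) ∈ S ↔ t ≤ r * minAbsCos n φ := by
    rw [← iInf_abs_mul_cos_add_mul_sin_eq_mul_minAbsCos n hr.le φ]
    rfl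
  rw [hpi, gaussianReal_prod_apply_eq_integral_rayleighTail hS (measurable_minAbsCos n) ht hSpolar,
    integral_rayleighTail_minAbsCos (by omega) t, integral_Icc_eq_integral_Ioc,
    ← intervalIntegral.integral_of_le (by positivity)]
  congr 1
  field_simp
  ring
end

section
/- For every n ≥ 1 and p > 0, if z ∼ N(0, I₂) and v_j = (cos((j−1)π/n), sin((j−1)π/n)), then E[(min_{1≤j≤n} |⟨z, v_j⟩|)^p] = 2^{p/2} Γ(1 + p/2) · (2n/π) ∫₀^{π/(2n)} sin^p θ dθ. -/
/-!
In polar coordinates `z = r (cos φ, sin φ)` one has `⟨z, v_j⟩ = r sin (φ + π/2 - (j-1)π/n)`, and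
`min_j |sin (y - jπ/n)| = sin d(y)` where `d(y)` is the distance from `y` to the lattice
`(π/n)ℤ`, i.e. the norm of `y` in `AddCircle (π/n)`. The moment therefore factors into the radial
integral `∫₀^∞ r e^{-r²/2} r^p dr / (2π) = 2^{p/2} Γ(1 + p/2) / (2π)` and the angular integral of
`sin^p d(φ + π/2)` over `2n` periods, each of which contributes `2 ∫₀^{π/(2n)} sin^p θ dθ`.
-/

open Real MeasureTheory ProbabilityTheory

namespace AddCircle

variable {p : ℝ}

@[simp]
theorem coe_sub_intCast_mul_period (x : ℝ) (m : ℤ) : ((x - m * p : ℝ) : AddCircle p) = x := by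
  simp [coe_period]

theorem norm_coe_le_abs_sub_intCast_mul (x : ℝ) (m : ℤ) : ‖(x : AddCircle p)‖ ≤ |x - m * p| := by
  rw [← coe_sub_intCast_mul_period x m]
  exact QuotientAddGroup.norm_mk_le_norm

theorem norm_coe_le_norm_coe_of_eq_intCast_mul {q : ℝ} (k : ℤ) (hq : q = k * p) (x : ℝ) :
    ‖(x : AddCircle p)‖ ≤ ‖(x : AddCircle q)‖ := by
  subst hq
  rw [norm_eq (k * p)]
  simpa [mul_assoc] using norm_coe_le_abs_sub_intCast_mul (p := p) x (round ((k * p)⁻¹ * x) * k)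

end AddCircle

theorem norm_coe_addCircle_pi_le (x : ℝ) : ‖(x : AddCircle π)‖ ≤ π / 2 := by
  simpa [abs_of_pos pi_pos] using AddCircle.norm_le_half_period π (x := x) pi_ne_zero

theorem abs_sin_eq_sin_norm_coe_addCircle (x : ℝ) : |sin x| = sin ‖(x : AddCircle π)‖ := by
  have hhalf := norm_coe_addCircle_pi_le x
  rw [AddCircle.norm_eq] at hhalf ⊢
  rw [← abs_sin_eq_sin_abs_of_abs_le_pi (by linarith [pi_pos]), sin_sub_int_mul_pi, abs_mul,
    abs_neg_one_zpow, one_mul]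

theorem norm_coe_addCircle_pi_div_le {n : ℕ} (hn : 0 < n) (x : ℝ) :
    ‖(x : AddCircle (π / n))‖ ≤ π / 2 := by
  have hc : 0 < π / n := by positivity
  refine (AddCircle.norm_le_half_period _ hc.ne').trans ?_
  rw [abs_of_pos hc]
  exact div_le_div_of_nonneg_right (div_le_self pi_pos.le (by exact_mod_cast hn)) zero_le_two

theorem iInf_abs_sin_sub_mul_pi_div {n : ℕ} (hn : 0 < n) (y : ℝ) :
    ⨅ j : Fin n, |sin (y - j * (π / n))| = sin ‖(y : AddCircle (π / n))‖ := by
  set c := π / n with hc_def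
  have hnc : ((n : ℤ) : ℝ) * c = π := by rw [hc_def]; push_cast; field_simp
  have hc_half := norm_coe_addCircle_pi_div_le hn y
  simp_rw [abs_sin_eq_sin_norm_coe_addCircle]
  apply le_antisymm
  · obtain ⟨m, hm⟩ : ∃ m : ℤ, |y - m * c| = ‖(y : AddCircle c)‖ := ⟨_, (AddCircle.norm_eq c).symm⟩
    have hm_nonneg : 0 ≤ m % n := Int.emod_nonneg m (by omega)
    have hm_lt : m % n < n := Int.emod_lt_of_pos m (by omega)
    -- `j ≡ m (mod n)`, so `j * (π / n)` differs from the nearest lattice point `m * (π / n)` by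
    -- a multiple of `π`
    let j : Fin n := ⟨(m % n).toNat, by omega⟩
    have hj : y - j * c = y - m * c + (m / n : ℤ) * π := by
      have : ((j : ℕ) : ℤ) = m - n * (m / n) := Int.toNat_of_nonneg hm_nonneg ▸ Int.emod_def m n
      rw [← hnc, show ((j : ℕ) : ℝ) = ((j : ℕ) : ℤ) by norm_cast, this]
      push_cast; ring
    refine ciInf_le_of_le (Set.finite_range _).bddBelow j (le_of_eq ?_)
    rw [hj, ← sub_neg_eq_add, ← neg_mul, ← Int.cast_neg, AddCircle.coe_sub_intCast_mul_period,
      ← hm, (AddCircle.norm_coe_eq_abs_iff π pi_ne_zero).2]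
    rwa [hm, abs_of_pos pi_pos]
  · have : Nonempty (Fin n) := ⟨⟨0, hn⟩⟩
    refine le_ciInf fun j => sin_le_sin_of_le_of_le_pi_div_two
      (by linarith [norm_nonneg (y : AddCircle c), pi_pos]) (norm_coe_addCircle_pi_le _) ?_
    calc ‖(y : AddCircle c)‖ = ‖((y - (j : ℕ) * c : ℝ) : AddCircle c)‖ := by
          simpa using (congrArg norm (AddCircle.coe_sub_intCast_mul_period (p := c) y j)).symm
      _ ≤ ‖((y - (j : ℕ) * c : ℝ) : AddCircle π)‖ :=
          AddCircle.norm_coe_le_norm_coe_of_eq_intCast_mul n hnc.symm _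

theorem integral_Ioi_mul_exp_neg_sq_div_two_mul_rpow {p : ℝ} (hp : -2 < p) :
    ∫ r in Set.Ioi (0 : ℝ), r * exp (-r ^ 2 / 2) * r ^ p = 2 ^ (p / 2) * Gamma (1 + p / 2) := by
  have hΓ : (p + 1 + 1) / 2 = 1 + p / 2 := by ring
  calc ∫ r in Set.Ioi (0 : ℝ), r * exp (-r ^ 2 / 2) * r ^ p
      = ∫ r in Set.Ioi (0 : ℝ), r ^ (p + 1) * exp (-(1 / 2) * r ^ (2 : ℝ)) := by
        refine setIntegral_congr_fun measurableSet_Ioi fun r (hr : 0 < r) => ?_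
        rw [rpow_add hr, rpow_one, rpow_two]
        ring_nf
    _ = (1 / 2 : ℝ) ^ (-(1 + p / 2)) * (1 / 2) * Gamma (1 + p / 2) := by
        rw [integral_rpow_mul_exp_neg_mul_rpow two_pos (by linarith) one_half_pos, ← hΓ]
        ring_nf
    _ = 2 ^ (p / 2) * Gamma (1 + p / 2) := by
        rw [one_div, inv_rpow zero_le_two, ← rpow_neg zero_le_two, neg_neg, rpow_add two_pos,
          rpow_one]
        ring

theorem integral_gaussianReal_prod_eq_setIntegral_polarCoord (G : ℝ × ℝ → ℝ) :
    ∫ q, G q ∂(gaussianReal 0 1).prod (gaussianReal 0 1)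
      = (2 * π)⁻¹ * ∫ q in polarCoord.target, q.1 * exp (-q.1 ^ 2 / 2) * G (polarCoord.symm q) := by
  have hpdf : Measurable (gaussianPDF 0 1) := measurable_gaussianPDF 0 1
  rw [gaussianReal_of_var_ne_zero 0 one_ne_zero, prod_withDensity hpdf hpdf,
    ← Measure.volume_eq_prod, integral_withDensity_eq_integral_toReal_smul
      (by fun_prop) (.of_forall fun q => ENNReal.mul_lt_top gaussianPDF_lt_top gaussianPDF_lt_top),
    ← integral_comp_polarCoord_symm, ← integral_const_mul]
  refine setIntegral_congr_fun polarCoord.open_target.measurableSet fun q _ => ?_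
  have hsq : (q.1 * cos q.2) ^ 2 + (q.1 * sin q.2) ^ 2 = q.1 ^ 2 := by
    linear_combination q.1 ^ 2 * sin_sq_add_cos_sq q.2
  have hexp : exp (-(q.1 * cos q.2) ^ 2 / 2) * exp (-(q.1 * sin q.2) ^ 2 / 2)
      = exp (-q.1 ^ 2 / 2) := by
    rw [← exp_add, ← hsq]; ring_nf
  have hsqrt : (2 * π)⁻¹ = (√(2 * π))⁻¹ * (√(2 * π))⁻¹ := by
    rw [← mul_inv, mul_self_sqrt (by positivity)]
  simp only [polarCoord_symm_apply, ENNReal.toReal_mul, toReal_gaussianPDF, gaussianPDFReal,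
    smul_eq_mul, NNReal.coe_one, mul_one, sub_zero]
  rw [← hexp, hsqrt]
  ring

theorem integral_gaussianReal_prod_of_polarCoord_symm_eq_rpow_mul {p : ℝ} (hp : -2 < p)
    {G : ℝ × ℝ → ℝ} {h : ℝ → ℝ} (hG : ∀ r > 0, ∀ θ, G (polarCoord.symm (r, θ)) = r ^ p * h θ) :
    ∫ q, G q ∂(gaussianReal 0 1).prod (gaussianReal 0 1)
      = 2 ^ (p / 2) * Gamma (1 + p / 2) * ((2 * π)⁻¹ * ∫ θ in Set.Ioo (-π) π, h θ) := by
  rw [integral_gaussianReal_prod_eq_setIntegral_polarCoord, polarCoord_target,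
    setIntegral_congr_fun (measurableSet_Ioi.prod measurableSet_Ioo) fun q hq => by
      rw [hG q.1 hq.1 q.2, ← mul_assoc],
    Measure.volume_eq_prod, setIntegral_prod_mul (fun r => r * exp (-r ^ 2 / 2) * r ^ p) h,
    integral_Ioi_mul_exp_neg_sq_div_two_mul_rpow hp]
  ring

theorem intervalIntegral_comp_norm_coe_addCircle {c : ℝ} (hc : 0 < c) {f : ℝ → ℝ}
    (hf : ContinuousOn f (Set.Icc 0 (c / 2))) (t : ℝ) (k : ℕ) :
    ∫ θ in t..t + k * c, f ‖(θ : AddCircle c)‖ = 2 * k * ∫ θ in 0..c / 2, f θ := by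
  set g : ℝ → ℝ := fun θ => f ‖(θ : AddCircle c)‖ with hg
  have hg_cont : Continuous g := hf.comp_continuous (continuous_norm.comp continuous_quotient_mk')
    fun θ => ⟨norm_nonneg _, by
      simpa [abs_of_pos hc] using AddCircle.norm_le_half_period c (x := θ) hc.ne'⟩
  have hper : Function.Periodic g c := fun θ => by simp [hg]
  have hint (a b : ℝ) : IntervalIntegrable g volume a b := hg_cont.intervalIntegrable a b
  have hhalf : ∫ θ in 0..c / 2, g θ = ∫ θ in 0..c / 2, f θ := by
    refine intervalIntegral.integral_congr fun θ hθ => ?_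
    rw [Set.uIcc_of_le (by positivity)] at hθ
    have hθ_abs : |θ| ≤ |c| / 2 := by rw [abs_of_pos hc, abs_of_nonneg hθ.1]; exact hθ.2
    simp only [hg]
    rw [(AddCircle.norm_coe_eq_abs_iff c hc.ne').2 hθ_abs, abs_of_nonneg hθ.1]
  have hneg : ∫ θ in -(c / 2)..0, g θ = ∫ θ in 0..c / 2, g θ := by
    rw [← neg_zero, ← intervalIntegral.integral_comp_neg, neg_zero]
    simp [hg]
  calc ∫ θ in t..t + k * c, g θ = k * ∫ θ in t..t + c, g θ := by
        simpa using hper.intervalIntegral_add_zsmul_eq k t hint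
    _ = k * ∫ θ in -(c / 2)..c / 2, g θ := by
        rw [hper.intervalIntegral_add_eq t (-(c / 2))]; ring_nf
    _ = 2 * k * ∫ θ in 0..c / 2, f θ := by
        rw [← intervalIntegral.integral_add_adjacent_intervals (hint _ 0) (hint 0 _), hneg, hhalf]
        ring

theorem iInf_abs_cos_sub_mul_pi_div {n : ℕ} (hn : 0 < n) (θ : ℝ) :
    ⨅ j : Fin n, |cos (θ - j * π / n)| = sin ‖((θ + π / 2 : ℝ) : AddCircle (π / n))‖ := by
  rw [← iInf_abs_sin_sub_mul_pi_div hn]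
  congr! 2 with j
  rw [← sin_add_pi_div_two]
  ring_nf

theorem integral_Ioo_sin_norm_coe_addCircle_rpow {n : ℕ} (hn : 0 < n) {p : ℝ} (hp : 0 ≤ p)
    (s : ℝ) :
    ∫ θ in Set.Ioo (-π) π, sin ‖((θ + s : ℝ) : AddCircle (π / n))‖ ^ p
      = 4 * n * ∫ θ in Set.Icc 0 (π / (2 * n)), sin θ ^ p := by
  have hperiods : π + s = -π + s + (2 * n : ℕ) * (π / n) := by push_cast; field_simp; ring
  rw [← integral_Ioc_eq_integral_Ioo, ← intervalIntegral.integral_of_le (by linarith [pi_pos]),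
    intervalIntegral.integral_comp_add_right (fun θ => sin ‖(θ : AddCircle (π / n))‖ ^ p),
    hperiods, intervalIntegral_comp_norm_coe_addCircle (by positivity)
      (continuous_sin.rpow_const fun _ => Or.inr hp).continuousOn,
    integral_Icc_eq_integral_Ioc, ← intervalIntegral.integral_of_le (by positivity)]
  push_cast
  ring_nf

/-- For `z ∼ N(0, I₂)` and `v j = (cos((j-1)π/n), sin((j-1)π/n))`,
`E[(min_j |⟨z, v j⟩|)^p] = 2^{p/2} Γ(1 + p/2) (2n/π) ∫₀^{π/(2n)} sin^p θ dθ`. -/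
theorem moment_min_abs_inner (n : ℕ) (hn : 1 ≤ n) (p : ℝ) (hp : 0 < p) :
    ∫ z, (⨅ j : Fin n, |z 0 * Real.cos ((j : ℝ) * π / n)
          + z 1 * Real.sin ((j : ℝ) * π / n)|) ^ p
        ∂(Measure.pi fun _ : Fin 2 => gaussianReal 0 1)
      = 2 ^ (p / 2) * Real.Gamma (1 + p / 2) *
          ((2 * n / π) * ∫ θ in Set.Icc 0 (π / (2 * n)), Real.sin θ ^ p) := by
  set G : ℝ × ℝ → ℝ := fun q =>
    (⨅ j : Fin n, |q.1 * cos ((j : ℝ) * π / n) + q.2 * sin ((j : ℝ) * π / n)|) ^ p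
  set h : ℝ → ℝ := fun θ => sin ‖((θ + π / 2 : ℝ) : AddCircle (π / n))‖ ^ p
  have hG : ∀ r > 0, ∀ θ, G (polarCoord.symm (r, θ)) = r ^ p * h θ := by
    intro r hr θ
    have hinner (j : Fin n) : |r * cos θ * cos (j * π / n) + r * sin θ * sin (j * π / n)|
        = r * |cos (θ - j * π / n)| := by
      rw [mul_assoc r, mul_assoc r, ← mul_add, ← cos_sub, abs_mul, abs_of_pos hr]
    simp only [G, h, polarCoord_symm_apply, hinner, ← mul_iInf_of_nonneg hr.le,
      iInf_abs_cos_sub_mul_pi_div hn]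
    exact mul_rpow hr.le (sin_nonneg_of_nonneg_of_le_pi (norm_nonneg _)
      (by linarith [norm_coe_addCircle_pi_div_le hn (θ + π / 2), pi_pos]))
  calc _ = ∫ q, G q ∂(gaussianReal 0 1).prod (gaussianReal 0 1) :=
        (measurePreserving_finTwoArrow _).integral_comp' G
    _ = _ := by
        rw [integral_gaussianReal_prod_of_polarCoord_symm_eq_rpow_mul (by linarith) hG,
          integral_Ioo_sin_norm_coe_addCircle_rpow hn hp.le]
        field_simp
        ring
end

section
/- For every n ≥ 1, if z ∼ N(0, I₂) and v_j = (cos((j−1)π/n), sin((j−1)π/n)) for j = 1,…,n, then E[(min_{1≤j≤n} |⟨z, v_j⟩|)²] = 1 − (n/π) · sin(π/n). -/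
/-!
In polar coordinates `z = r (cos θ, sin θ)` one has `⟨z, v_j⟩ = r cos (θ - jπ/n)`, so the squared
minimum is `r² · g(θ)` with `g(θ) = min_j cos² (θ - jπ/n)`. The Gaussian density is radial, so the
expectation factors as `(1/2π) ∫ r³ e^{-r²/2} dr · ∫_{-π}^{π} g = (1/π) ∫_{-π}^{π} g`. Rotating the
directions shows that `g` has period `π/n`, and on the window `|θ - π/2| ≤ π/(2n)` the minimum is
attained at `j = 0`, so `∫_{-π}^{π} g = 2n ∫_{π/2-π/(2n)}^{π/2+π/(2n)} cos² = π - n sin (π/n)`.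
-/

open Real MeasureTheory ProbabilityTheory Set
open scoped NNReal

lemma sq_iInf_abs {ι : Type*} [Finite ι] (f : ι → ℝ) :
    (⨅ i, |f i|) ^ 2 = ⨅ i, f i ^ 2 := by
  cases isEmpty_or_nonempty ι
  · simp
  · simp_rw [← sqrt_sq_eq_abs]
    rw [← Monotone.map_ciInf_of_continuousAt continuous_sqrt.continuousAt sqrt_monotone
      (Set.finite_range _).bddBelow, sq_sqrt (le_ciInf fun i => sq_nonneg _)]

lemma gaussianPDFReal_mul_gaussianPDFReal (x y : ℝ) :
    gaussianPDFReal 0 1 x * gaussianPDFReal 0 1 y = exp (-(x ^ 2 + y ^ 2) / 2) / (2 * π) := by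
  have hπ : 0 ≤ 2 * π := by positivity
  simp only [gaussianPDFReal, NNReal.coe_one, mul_one, sub_zero]
  rw [mul_mul_mul_comm, ← mul_inv, mul_self_sqrt hπ, ← exp_add, inv_mul_eq_div]
  ring_nf

lemma integral_gaussianReal_prod {E : Type*} [NormedAddCommGroup E] [NormedSpace ℝ E]
    {μ₁ μ₂ : ℝ} {v₁ v₂ : ℝ≥0} (hv₁ : v₁ ≠ 0) (hv₂ : v₂ ≠ 0) (f : ℝ × ℝ → E) :
    ∫ p, f p ∂((gaussianReal μ₁ v₁).prod (gaussianReal μ₂ v₂))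
      = ∫ p, (gaussianPDFReal μ₁ v₁ p.1 * gaussianPDFReal μ₂ v₂ p.2) • f p := by
  rw [gaussianReal_of_var_ne_zero _ hv₁, gaussianReal_of_var_ne_zero _ hv₂,
    prod_withDensity (measurable_gaussianPDF _ _) (measurable_gaussianPDF _ _),
    ← Measure.volume_eq_prod, integral_withDensity_eq_integral_toReal_smul (by fun_prop)
      (ae_of_all _ fun _ => ENNReal.mul_lt_top gaussianPDF_lt_top gaussianPDF_lt_top)]
  simp [gaussianPDF, ENNReal.toReal_mul, gaussianPDFReal_nonneg]

lemma integral_Ioi_pow_three_mul_exp_neg_sq_div_two :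
    ∫ r in Ioi (0 : ℝ), r ^ 3 * exp (-r ^ 2 / 2) = 2 := by
  have h := integral_rpow_mul_exp_neg_mul_rpow (p := 2) (q := 3) (b := 1 / 2)
    (by norm_num) (by norm_num) (by norm_num)
  norm_num [Gamma_two] at h
  convert h using 5
  ring

lemma integral_gaussianReal_prod_of_eq_sq_mul {F : ℝ × ℝ → ℝ} {g : ℝ → ℝ}
    (hF : ∀ r θ, F (r * cos θ, r * sin θ) = r ^ 2 * g θ) :
    ∫ p, F p ∂((gaussianReal 0 1).prod (gaussianReal 0 1))
      = (∫ θ in Ioo (-π) π, g θ) / π := by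
  set radial : ℝ → ℝ := fun r => r ^ 3 * exp (-r ^ 2 / 2) / (2 * π)
  have hpolar : ∀ p ∈ polarCoord.target, p.1 • (gaussianPDFReal 0 1 (polarCoord.symm p).1
      * gaussianPDFReal 0 1 (polarCoord.symm p).2) • F (polarCoord.symm p)
      = radial p.1 * g p.2 := by
    rintro ⟨r, θ⟩ -
    rw [polarCoord_symm_apply, gaussianPDFReal_mul_gaussianPDFReal, hF, smul_eq_mul, smul_eq_mul,
      mul_pow, mul_pow, ← mul_add, cos_sq_add_sin_sq, mul_one]
    ring
  rw [integral_gaussianReal_prod one_ne_zero one_ne_zero, ← integral_comp_polarCoord_symm,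
    setIntegral_congr_fun polarCoord.open_target.measurableSet hpolar, polarCoord_target,
    Measure.volume_eq_prod, setIntegral_prod_mul radial g, integral_div,
    integral_Ioi_pow_three_mul_exp_neg_sq_div_two]
  field_simp

noncomputable def minCosSq (n : ℕ) (θ : ℝ) : ℝ :=
  ⨅ j : Fin n, cos (θ - j * π / n) ^ 2

lemma continuous_minCosSq (n : ℕ) : Continuous (minCosSq n) := by
  unfold minCosSq
  rcases n.eq_zero_or_pos with rfl | hn
  · simpa using continuous_const
  · have : NeZero n := ⟨hn.ne'⟩
    simp_rw [← Finset.inf'_univ_eq_ciInf]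
    exact Continuous.finset_inf'_apply _ fun j _ => by fun_prop

lemma periodic_minCosSq (n : ℕ) : Function.Periodic (minCosSq n) (π / n) := by
  intro θ
  rcases n with _ | m
  · simp
  have hshift : ∀ k : Fin (m + 1),
      cos (θ + π / (m + 1 : ℕ) - (finRotate (m + 1) k : ℕ) * π / (m + 1 : ℕ)) ^ 2
        = cos (θ - k * π / (m + 1 : ℕ)) ^ 2 := by
    intro k
    -- `finRotate` sends `k` to `k + 1`, except that the last index wraps around to `0`, which
    -- shifts the angle by `π` instead
    rw [coe_finRotate]
    split_ifs with hk
    · have : θ + π / (m + 1 : ℕ) - ((0 : ℕ) : ℝ) * π / (m + 1 : ℕ)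
          = θ - k * π / (m + 1 : ℕ) + π := by
        subst hk; push_cast; field_simp; ring
      rw [this, cos_add_pi, neg_sq]
    · congr 2; push_cast; field_simp; ring
  simp only [minCosSq]
  rw [← (finRotate (m + 1)).iInf_comp]
  simp_rw [hshift]

lemma cos_le_cos_of_abs_le_of_mem_Icc {s t u : ℝ} (hs : |s| ≤ u)
    (ht : t ∈ Icc u (2 * π - u)) : cos t ≤ cos s := by
  have hu : u ≤ π := by linarith [ht.1, ht.2]
  calc cos t ≤ cos u := by
        rcases le_total t π with htπ | hπt
        · exact cos_le_cos_of_nonneg_of_le_pi (abs_nonneg s |>.trans hs) htπ ht.1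
        · rw [← cos_two_pi_sub]
          exact cos_le_cos_of_nonneg_of_le_pi (abs_nonneg s |>.trans hs) (by linarith)
            (by linarith [ht.2])
    _ ≤ cos |s| := cos_le_cos_of_nonneg_of_le_pi (abs_nonneg s) hu hs
    _ = cos s := cos_abs s

lemma cos_sq_le_cos_sq_sub {n m : ℕ} (hm : m < n) {θ : ℝ} (hθ : |θ - π / 2| ≤ π / (2 * n)) :
    cos θ ^ 2 ≤ cos (θ - m * π / n) ^ 2 := by
  rcases m.eq_zero_or_pos with rfl | hm₀
  · simp
  have hn : (0 : ℝ) < n := by exact_mod_cast hm₀.trans hm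
  set u := π / n
  have hu : 0 < u := div_pos pi_pos hn
  have hmu : u ≤ m * u := le_mul_of_one_le_left hu.le (by exact_mod_cast hm₀)
  have hmu' : m * u + u ≤ π := by
    have : (m + 1 : ℝ) * u ≤ n * u := by gcongr; exact_mod_cast hm
    rwa [mul_div_cancel₀ π hn.ne', add_one_mul] at this
  set s := 2 * θ - π
  have hs : |s| ≤ u := by
    rw [show s = 2 * (θ - π / 2) by ring, abs_mul, abs_two]
    calc 2 * |θ - π / 2| ≤ 2 * (π / (2 * n)) := by gcongr
      _ = u := by simp only [u]; field_simp
  have ht : 2 * (m * u) - s ∈ Icc u (2 * π - u) := by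
    rw [abs_le] at hs
    constructor <;> linarith
  have key := cos_le_cos_of_abs_le_of_mem_Icc hs ht
  rw [cos_sq, cos_sq, show 2 * θ = s + π by ring,
    show 2 * (θ - m * π / n) = -(2 * (m * u) - s) + π by ring, cos_add_pi, cos_add_pi, cos_neg]
  linarith

lemma minCosSq_eq_cos_sq {n : ℕ} (hn : n ≠ 0) {θ : ℝ} (hθ : |θ - π / 2| ≤ π / (2 * n)) :
    minCosSq n θ = cos θ ^ 2 := by
  have : NeZero n := ⟨hn⟩
  refine le_antisymm ?_ (le_ciInf fun j => cos_sq_le_cos_sq_sub j.isLt hθ)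
  refine (ciInf_le (Set.finite_range _).bddBelow 0).trans ?_
  simp

lemma integral_cos_sq_pi_div_two_sub_add (h : ℝ) :
    ∫ x in (π / 2 - h)..(π / 2 + h), cos x ^ 2 = h - sin (2 * h) / 2 := by
  rw [integral_cos_sq, cos_pi_div_two_sub, sin_pi_div_two_sub, cos_add, sin_add, sin_two_mul]
  simp only [cos_pi_div_two, sin_pi_div_two]
  ring

lemma integral_minCosSq {n : ℕ} (hn : n ≠ 0) :
    ∫ θ in Ioo (-π) π, minCosSq n θ = π - n * sin (π / n) := by
  have hh : 0 < π / (2 * n) := by positivity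
  set h := π / (2 * n)
  have hperiod : ∫ θ in (-π)..π, minCosSq n θ
      = 2 * n * ∫ θ in (π / 2 - h)..(π / 2 + h), minCosSq n θ := by
    have hrep := (periodic_minCosSq n).intervalIntegral_add_zsmul_eq (2 * n) (-π)
      fun _ _ => (continuous_minCosSq n).intervalIntegrable _ _
    have hshift := (periodic_minCosSq n).intervalIntegral_add_eq (-π) (π / 2 - h)
    rw [hshift, show π / 2 - h + π / n = π / 2 + h by simp only [h]; field_simp; ring,
      zsmul_eq_mul, zsmul_eq_mul,
      show -π + ((2 * n : ℤ) : ℝ) * (π / n) = π by push_cast; field_simp; ring] at hrep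
    exact_mod_cast hrep
  have hwindow : ∫ θ in (π / 2 - h)..(π / 2 + h), minCosSq n θ
      = ∫ θ in (π / 2 - h)..(π / 2 + h), cos θ ^ 2 := by
    refine intervalIntegral.integral_congr fun θ hθ => minCosSq_eq_cos_sq hn ?_
    rw [uIcc_of_le (by linarith)] at hθ
    rw [abs_le]
    constructor <;> linarith [hθ.1, hθ.2]
  rw [← integral_Ioc_eq_integral_Ioo, ← intervalIntegral.integral_of_le (by linarith [pi_pos]),
    hperiod, hwindow, integral_cos_sq_pi_div_two_sub_add]
  simp only [h]
  field_simp

/-- For `z ∼ N(0, I₂)` and `v j = (cos((j-1)π/n), sin((j-1)π/n))`,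
`E[(min_j |⟨z, v j⟩|)²] = 1 - (n/π) sin(π/n)`. -/
theorem second_moment_min_abs_inner (n : ℕ) (hn : 1 ≤ n) :
    ∫ z, (⨅ j : Fin n, |z 0 * Real.cos ((j : ℝ) * π / n)
          + z 1 * Real.sin ((j : ℝ) * π / n)|) ^ 2
        ∂(Measure.pi fun _ : Fin 2 => gaussianReal 0 1)
      = 1 - (n / π) * Real.sin (π / n) := by
  have hpolar : ∀ r θ, (⨅ j : Fin n, |r * cos θ * cos ((j : ℝ) * π / n)
      + r * sin θ * sin ((j : ℝ) * π / n)|) ^ 2 = r ^ 2 * minCosSq n θ := by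
    intro r θ
    simp only [sq_iInf_abs, minCosSq, Real.mul_iInf_of_nonneg (sq_nonneg r), cos_sub]
    exact iInf_congr fun j => by ring
  calc _ = ∫ p, (⨅ j : Fin n, |p.1 * cos ((j : ℝ) * π / n) + p.2 * sin ((j : ℝ) * π / n)|) ^ 2
        ∂((gaussianReal 0 1).prod (gaussianReal 0 1)) :=
        (measurePreserving_finTwoArrow _).integral_comp' _
    _ = (∫ θ in Ioo (-π) π, minCosSq n θ) / π := integral_gaussianReal_prod_of_eq_sq_mul hpolar
    _ = 1 - (n / π) * sin (π / n) := by
      rw [integral_minCosSq (by omega)]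
      field_simp
end

section
/- The double integral (12/π) ∫₀¹∫₀¹ s(1 − s − st)² / (1 + s² + s²t²)^{5/2} ds dt is strictly greater than 1 − 2√2/π. -/
/-!
Since `√y ≤ (1 + y) / 2`, we have `(1 + x) ^ (5/2) ≤ (1 + x)² (2 + x) / 2`, and on `[0, 2]` the
quadratic `(3 - 2x)(5 - 3x)/20` stays below the reciprocal of this quintic. With
`x = s² (1 + t²) ∈ [0, 2]` this gives a polynomial minorant of the integrand whose double integral
over the unit square is `709/25200`, and `12 · 709/25200 + 2√2 > 3.15 > π`.
-/

open Real MeasureTheory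

lemma rpow_five_halves_le {y : ℝ} (hy : 0 ≤ y) : y ^ ((5 : ℝ) / 2) ≤ y ^ 2 * (y + 1) / 2 := by
  have hsplit : y ^ ((5 : ℝ) / 2) = y ^ 2 * √y := by
    rw [sqrt_eq_rpow, ← rpow_natCast, ← rpow_add' hy (by norm_num)]
    norm_num
  have hsqrt : √y ≤ (y + 1) / 2 := by
    rw [sqrt_le_left (by linarith)]
    nlinarith [sq_nonneg (y - 1)]
  rw [hsplit, mul_div_assoc]
  exact mul_le_mul_of_nonneg_left hsqrt (by positivity)

noncomputable def minorant (x : ℝ) : ℝ := (3 - 2 * x) * (5 - 3 * x) / 20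

lemma minorant_mul_rpow_le_one {x : ℝ} (hx0 : 0 ≤ x) (hx2 : x ≤ 2) :
    minorant x * (1 + x) ^ ((5 : ℝ) / 2) ≤ 1 := by
  rcases le_or_gt (minorant x) 0 with hneg | hpos
  · nlinarith [rpow_nonneg (by linarith : 0 ≤ 1 + x) ((5 : ℝ) / 2)]
  have hx := mul_nonneg hx0 (sub_nonneg.2 hx2)
  calc minorant x * (1 + x) ^ ((5 : ℝ) / 2)
      ≤ minorant x * ((1 + x) ^ 2 * (1 + x + 1) / 2) :=
        mul_le_mul_of_nonneg_left (rpow_five_halves_le (by linarith)) hpos.le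
    _ ≤ 1 := by
        unfold minorant
        nlinarith [mul_nonneg hx (sq_nonneg (x - 1/2)), mul_nonneg hx0 (sq_nonneg (x - 1/2)),
          mul_nonneg (sub_nonneg.2 hx2) (sq_nonneg (x - 1/2)), sq_nonneg (x - 1/2),
          mul_nonneg hx (sq_nonneg x), mul_nonneg (mul_nonneg hx hx0) (sq_nonneg (x - 1/2))]

lemma mul_minorant_le_div {a x : ℝ} (ha : 0 ≤ a) (hx0 : 0 ≤ x) (hx2 : x ≤ 2) :
    a * minorant x ≤ a / (1 + x) ^ ((5 : ℝ) / 2) := by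
  rw [le_div_iff₀ (by positivity), mul_assoc]
  exact mul_le_of_le_one_right ha (minorant_mul_rpow_le_one hx0 hx2)

lemma integral_poly_unitInterval {n : ℕ} (c : Fin n → ℝ) :
    ∫ x in (0 : ℝ)..1, ∑ k, c k * x ^ (k : ℕ) = ∑ k, c k / (k + 1) := by
  rw [intervalIntegral.integral_finsetSum fun k _ =>
    (by fun_prop : Continuous _).intervalIntegrable _ _]
  simp [integral_pow, div_eq_mul_inv]

lemma integral_mul_minorant (u w : ℝ) :
    ∫ s in (0 : ℝ)..1, s * (1 - u * s) ^ 2 * minorant (w * s ^ 2) =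
      (15 / 2 - 19 * w / 4 + w ^ 2 - 10 * u + 38 * u * w / 5 - 12 * u * w ^ 2 / 7
        + 15 * u ^ 2 / 4 - 19 * u ^ 2 * w / 6 + 3 * u ^ 2 * w ^ 2 / 4) / 20 := by
  have hpoly : (fun s : ℝ => s * (1 - u * s) ^ 2 * minorant (w * s ^ 2)) = fun s =>
      ∑ k, ![0, 15, -30 * u, 15 * u ^ 2 - 19 * w, 38 * u * w, 6 * w ^ 2 - 19 * u ^ 2 * w,
        -12 * u * w ^ 2, 6 * u ^ 2 * w ^ 2] k / 20 * s ^ (k : ℕ) := by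
    funext s
    simp only [Fin.sum_univ_eight, Matrix.cons_val, Fin.coe_ofNat_eq_mod, minorant]
    ring
  rw [hpoly, integral_poly_unitInterval]
  simp only [Fin.sum_univ_eight, Matrix.cons_val, Fin.coe_ofNat_eq_mod]
  ring

lemma integral_integral_mul_minorant :
    ∫ t in (0 : ℝ)..1, ∫ s in (0 : ℝ)..1,
      s * (1 - (1 + t) * s) ^ 2 * minorant ((1 + t ^ 2) * s ^ 2) = 709 / 25200 := by
  have hpoly : (fun t : ℝ => ∫ s in (0 : ℝ)..1,
      s * (1 - (1 + t) * s) ^ 2 * minorant ((1 + t ^ 2) * s ^ 2)) = fun t =>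
      ∑ k, ![407 / 8400, -38 / 525, 457 / 8400, 22 / 525, -137 / 1680, -3 / 280, 3 / 80] k *
        t ^ (k : ℕ) := by
    funext t
    rw [integral_mul_minorant]
    simp only [Fin.sum_univ_seven, Matrix.cons_val, Fin.coe_ofNat_eq_mod]
    ring
  rw [hpoly, integral_poly_unitInterval]
  simp only [Fin.sum_univ_seven, Matrix.cons_val, Fin.coe_ofNat_eq_mod]
  norm_num

noncomputable def integrand (t s : ℝ) : ℝ :=
  s * (1 - s - s * t) ^ 2 / (1 + s ^ 2 + s ^ 2 * t ^ 2) ^ ((5 : ℝ) / 2)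

lemma continuous_integrand : Continuous (Function.uncurry integrand) := by
  unfold integrand Function.uncurry
  fun_prop (disch := intros; positivity)

lemma mul_minorant_le_integrand {t s : ℝ} (ht : t ∈ Set.Icc (0 : ℝ) 1)
    (hs : s ∈ Set.Icc (0 : ℝ) 1) :
    s * (1 - (1 + t) * s) ^ 2 * minorant ((1 + t ^ 2) * s ^ 2) ≤ integrand t s := by
  obtain ⟨ht0, ht1⟩ := ht
  obtain ⟨hs0, hs1⟩ := hs
  have hx2 : (1 + t ^ 2) * s ^ 2 ≤ 2 * 1 :=
    mul_le_mul (by nlinarith) (by nlinarith) (by positivity) (by norm_num)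
  rw [integrand, show 1 - s - s * t = 1 - (1 + t) * s by ring,
    show 1 + s ^ 2 + s ^ 2 * t ^ 2 = 1 + (1 + t ^ 2) * s ^ 2 by ring]
  exact mul_minorant_le_div (by positivity) (by positivity) (by linarith)

lemma one_sub_two_sqrt_two_div_pi_lt : 1 - 2 * √2 / π < 12 / π * (709 / 25200) := by
  have hsqrt : (1.41 : ℝ) < √2 := (lt_sqrt (by norm_num)).2 (by norm_num)
  rw [sub_lt_iff_lt_add, show 12 / π * (709 / 25200) + 2 * √2 / π
    = (12 * (709 / 25200) + 2 * √2) / π by ring, one_lt_div pi_pos]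
  linarith [pi_lt_d2]

/-- `(12/π) ∫₀¹∫₀¹ s(1-s-st)²/(1+s²+s²t²)^{5/2} ds dt > 1 - 2√2/π`. -/
theorem double_integral_gt :
    1 - 2 * Real.sqrt 2 / π
      < (12 / π) * ∫ t in Set.Icc (0 : ℝ) 1, ∫ s in Set.Icc (0 : ℝ) 1,
          s * (1 - s - s * t) ^ 2 / (1 + s ^ 2 + s ^ 2 * t ^ 2) ^ ((5 : ℝ) / 2) := by
  change _ < 12 / π * ∫ t in Set.Icc (0 : ℝ) 1, ∫ s in Set.Icc (0 : ℝ) 1, integrand t s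
  simp only [integral_Icc_eq_integral_Ioc, ← intervalIntegral.integral_of_le zero_le_one]
  have hinner (t : ℝ) (ht : t ∈ Set.Icc (0 : ℝ) 1) :
      ∫ s in (0 : ℝ)..1, s * (1 - (1 + t) * s) ^ 2 * minorant ((1 + t ^ 2) * s ^ 2) ≤
        ∫ s in (0 : ℝ)..1, integrand t s :=
    intervalIntegral.integral_mono_on zero_le_one
      ((by unfold minorant; fun_prop : Continuous _).intervalIntegrable _ _)
      ((continuous_integrand.uncurry_left t).intervalIntegrable _ _)
      fun s hs => mul_minorant_le_integrand ht hs
  have houter : 709 / 25200 ≤ ∫ t in (0 : ℝ)..1, ∫ s in (0 : ℝ)..1, integrand t s := by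
    rw [← integral_integral_mul_minorant]
    exact intervalIntegral.integral_mono_on zero_le_one
      ((intervalIntegral.continuous_parametric_intervalIntegral_of_continuous'
        (by unfold minorant Function.uncurry; fun_prop) 0 1).intervalIntegrable _ _)
      ((intervalIntegral.continuous_parametric_intervalIntegral_of_continuous'
        continuous_integrand 0 1).intervalIntegrable _ _) hinner
  calc 1 - 2 * √2 / π < 12 / π * (709 / 25200) := one_sub_two_sqrt_two_div_pi_lt
    _ ≤ _ := by gcongr
end
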